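/- arXiv:cs/0611070 — 4 statements merged into one kernel-verified Lean document; each statement's English description precedes it below -/
import Mathlib

section
/- For integers k_x, k_y with 1 ≤ k_x, k_y ≤ √n, define d_{k_x,k_y} = ∑_{i_x=1}^{√n} ∑_{i_y=1}^{√n} ((i_x + k_x - 1)² + (i_y - k_y)²)^{-α/2}. If α > 2, there exists a constant K > 0 independent of k_x, k_y, n such that d_{k_x,k_y} ≤ K·k_x^{2-α}. -/
open Finset


lemma dk_tailR (β : ℝ) (hβ : 1 < β) (a : ℕ) (ha : 1 ≤ a) (n : ℕ) :
    ∑ i ∈ Finset.range n, ((a : ℝ) + i) ^ (-β) ≤ (1 + 1 / (β - 1)) * (a : ℝ) ^ (1 - β) := by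
  have ha' : (1:ℝ) ≤ a := by exact_mod_cast ha
  have ha0 : (0:ℝ) < a := by linarith
  have hT : (0:ℝ) < 1 + 1 / (β - 1) := by
    have : (0:ℝ) < 1 / (β - 1) := one_div_pos.mpr (by linarith)
    linarith
  have hRpos : (0:ℝ) < (1 + 1/(β-1)) * (a:ℝ) ^ (1-β) :=
    mul_pos hT (Real.rpow_pos_of_pos ha0 _)
  cases n with
  | zero => simpa using hRpos.le
  | succ n =>
    rw [Finset.sum_range_succ']
    have hanti : AntitoneOn (fun x : ℝ => x ^ (-β)) (Set.Icc (a:ℝ) ((a:ℝ) + n)) := by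
      intro x hx y hy hxy
      exact Real.rpow_le_rpow_of_nonpos (lt_of_lt_of_le ha0 hx.1) hxy (by linarith)
    have hsum := hanti.sum_le_integral
    have hint : ∫ x in (a:ℝ)..((a:ℝ) + n), x ^ (-β)
        = (((a:ℝ) + n) ^ (-β + 1) - (a:ℝ) ^ (-β + 1)) / (-β + 1) := by
      apply integral_rpow
      refine Or.inr ⟨by linarith, ?_⟩
      rw [Set.uIcc_of_le (le_add_of_nonneg_right (Nat.cast_nonneg n))]
      intro h
      exact absurd h.1 (by push_neg; linarith)
    rw [show (-β + 1) = (1 - β) by ring] at hint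
    have hle : (((a:ℝ) + n) ^ (1 - β) - (a:ℝ) ^ (1 - β)) / (1 - β)
        ≤ (a:ℝ) ^ (1 - β) / (β - 1) := by
      have h1 : (0:ℝ) ≤ ((a:ℝ) + n) ^ (1 - β) := Real.rpow_nonneg (by positivity) _
      have hb1 : β - 1 ≠ 0 := by linarith
      have hb2 : (1:ℝ) - β ≠ 0 := by linarith
      have heq : (((a:ℝ) + n) ^ (1 - β) - (a:ℝ) ^ (1 - β)) / (1 - β)
          = ((a:ℝ) ^ (1 - β) - ((a:ℝ) + n) ^ (1 - β)) / (β - 1) := by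
        field_simp
        ring
      rw [heq]
      apply div_le_div_of_nonneg_right ?_ (by linarith)
      · linarith
    have hfirst := le_trans hsum (hint ▸ hle)
    have hlast : ((a:ℝ) + ((0:ℕ):ℝ)) ^ (-β) ≤ (a:ℝ) ^ (1 - β) := by
      rw [Nat.cast_zero, add_zero]
      exact Real.rpow_le_rpow_of_exponent_le ha' (by linarith)
    have hb1 : β - 1 ≠ 0 := by linarith
    calc (∑ i ∈ Finset.range n, ((a : ℝ) + ↑(i + 1)) ^ (-β)) + ((a:ℝ) + ((0:ℕ):ℝ)) ^ (-β)
        ≤ (a:ℝ) ^ (1 - β) / (β - 1) + (a:ℝ) ^ (1 - β) := add_le_add hfirst hlast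
      _ = (1 + 1 / (β - 1)) * (a:ℝ) ^ (1 - β) := by
          field_simp
          ring

lemma dk_abs_sum (β : ℝ) (hβ : 1 < β) (j ky m : ℕ) (hj : 1 ≤ j) (hky : 1 ≤ ky)
    (hkm : ky ≤ m) :
    ∑ iy ∈ Finset.Icc 1 m, ((j:ℝ) + |(iy:ℝ) - ky|) ^ (-β)
      ≤ 2 * (1 + 1 / (β - 1)) * (j : ℝ) ^ (1 - β) := by
  have hj' : (1:ℝ) ≤ j := by exact_mod_cast hj
  have hsplit : ∑ iy ∈ Finset.Ioc 0 ky, ((j:ℝ) + |(iy:ℝ) - ky|) ^ (-β)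
      + ∑ iy ∈ Finset.Ioc ky m, ((j:ℝ) + |(iy:ℝ) - ky|) ^ (-β)
      = ∑ iy ∈ Finset.Ioc 0 m, ((j:ℝ) + |(iy:ℝ) - ky|) ^ (-β) :=
    Finset.sum_Ioc_consecutive _ (Nat.zero_le ky) hkm
  have hIcc : Finset.Icc 1 m = Finset.Ioc 0 m := by
    rw [← Finset.Icc_add_one_left_eq_Ioc, zero_add]
  rw [hIcc, ← hsplit]
  have h1 : ∑ iy ∈ Finset.Ioc 0 ky, ((j:ℝ) + |(iy:ℝ) - ky|) ^ (-β)
      ≤ (1 + 1 / (β - 1)) * (j : ℝ) ^ (1 - β) := by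
    have : Finset.Ioc 0 ky = Finset.Ico 1 (ky + 1) := by
      rw [← Finset.Icc_add_one_left_eq_Ioc, Finset.Ico_add_one_right_eq_Icc, zero_add]
    rw [this, Finset.sum_Ico_eq_sum_range]
    simp only [Nat.add_sub_cancel]
    rw [← Finset.sum_range_reflect]
    have heq : ∀ i ∈ Finset.range ky,
        ((j:ℝ) + |((1 + (ky - 1 - i) : ℕ) : ℝ) - ky|) ^ (-β) = ((j:ℝ) + i) ^ (-β) := by
      intro i hi
      have hi' : i < ky := Finset.mem_range.mp hi
      have h1 : 1 + (ky - 1 - i) = ky - i := by omega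
      rw [h1]
      have h2 : ((ky - i : ℕ) : ℝ) = (ky : ℝ) - i := by
        have : i ≤ ky := hi'.le
        push_cast [Nat.cast_sub this]
        ring
      rw [h2]
      congr 2
      rw [show (ky:ℝ) - i - ky = -(i:ℝ) by ring, abs_neg, abs_of_nonneg (Nat.cast_nonneg i)]
    rw [Finset.sum_congr rfl heq]
    exact dk_tailR β hβ j hj ky
  have h2 : ∑ iy ∈ Finset.Ioc ky m, ((j:ℝ) + |(iy:ℝ) - ky|) ^ (-β)
      ≤ (1 + 1 / (β - 1)) * (j : ℝ) ^ (1 - β) := by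
    have : Finset.Ioc ky m = Finset.Ico (ky + 1) (m + 1) := by
      rw [← Finset.Icc_add_one_left_eq_Ioc, Finset.Ico_add_one_right_eq_Icc]
    rw [this, Finset.sum_Ico_eq_sum_range]
    have hmk : m + 1 - (ky + 1) = m - ky := by omega
    rw [hmk]
    have heq : ∀ i ∈ Finset.range (m - ky),
        ((j:ℝ) + |((ky + 1 + i : ℕ) : ℝ) - ky|) ^ (-β) = ((j:ℝ) + (i + 1)) ^ (-β) := by
      intro i _
      congr 2
      push_cast
      rw [show (ky:ℝ) + 1 + i - ky = (i:ℝ) + 1 by ring,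
        abs_of_nonneg (by positivity : (0:ℝ) ≤ (i:ℝ) + 1)]
    rw [Finset.sum_congr rfl heq]
    calc ∑ i ∈ Finset.range (m - ky), ((j:ℝ) + ((i:ℝ) + 1)) ^ (-β)
        ≤ ∑ i ∈ Finset.range (m - ky + 1), ((j:ℝ) + i) ^ (-β) := by
          rw [Finset.sum_range_succ']
          have : (0:ℝ) ≤ ((j:ℝ) + ((0:ℕ):ℝ)) ^ (-β) := Real.rpow_nonneg (by positivity) _
          have he : ∀ i ∈ Finset.range (m - ky),
              ((j:ℝ) + ((i:ℝ) + 1)) ^ (-β) = ((j:ℝ) + ((i+1 : ℕ):ℝ)) ^ (-β) := by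
            intro i _; push_cast; ring_nf
          rw [Finset.sum_congr rfl he]
          linarith
      _ ≤ (1 + 1 / (β - 1)) * (j : ℝ) ^ (1 - β) := dk_tailR β hβ j hj _
  linarith

lemma dk_pointwise (α : ℝ) (hα : 2 < α) (j : ℕ) (hj : 1 ≤ j) (t : ℝ) :
    ((j:ℝ)^2 + t^2) ^ (-(α/2)) ≤ 2 ^ (α/2) * ((j:ℝ) + |t|) ^ (-α) := by
  have hj' : (1:ℝ) ≤ j := by exact_mod_cast hj
  set x : ℝ := (j:ℝ) + |t| with hx
  have hxpos : 0 < x := by have := abs_nonneg t; simp only [hx]; linarith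
  have hsq : x ^ 2 / 2 ≤ (j:ℝ)^2 + t^2 := by
    have h1 : |t| ^ 2 = t ^ 2 := sq_abs t
    nlinarith [sq_nonneg ((j:ℝ) - |t|)]
  have step1 : ((j:ℝ)^2 + t^2) ^ (-(α/2)) ≤ (x ^ 2 / 2) ^ (-(α/2)) :=
    Real.rpow_le_rpow_of_nonpos (by positivity) hsq (by linarith)
  have step2 : (x ^ 2 / 2) ^ (-(α/2)) = 2 ^ (α/2) * x ^ (-α) := by
    rw [Real.div_rpow (by positivity) (by norm_num), div_eq_mul_inv,
      ← Real.rpow_neg (by norm_num : (0:ℝ) ≤ 2), neg_neg,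
      ← Real.rpow_natCast x 2, ← Real.rpow_mul hxpos.le]
    rw [show ((2:ℕ):ℝ) * (-(α/2)) = -α by push_cast; ring]
    ring
  rw [step2] at step1
  exact step1

/-- **Upper bound on the power transfer sum, `α > 2`.** For
`d_{k_x,k_y} = ∑_{i_x=1}^{√n} ∑_{i_y=1}^{√n} ((i_x+k_x-1)² + (i_y-k_y)²)^{-α/2}`
with `1 ≤ k_x, k_y ≤ √n`, there is a constant `K > 0` independent of
`k_x, k_y, n` with `d_{k_x,k_y} ≤ K·k_x^{2-α}`. -/
theorem dk_upper_bound (α : ℝ) (hα : 2 < α) :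
    ∃ K : ℝ, 0 < K ∧ ∀ m kx ky : ℕ, 1 ≤ kx → kx ≤ m → 1 ≤ ky → ky ≤ m →
      ∑ ix ∈ Finset.Icc 1 m, ∑ iy ∈ Finset.Icc 1 m,
          (((ix : ℝ) + kx - 1) ^ 2 + ((iy : ℝ) - ky) ^ 2) ^ (-(α / 2))
        ≤ K * (kx : ℝ) ^ (2 - α) := by
  have h1α : (1:ℝ) < α := by linarith
  have hα1 : (1:ℝ) < α - 1 := by linarith
  set C2 : ℝ := 2 ^ (α/2) * (2 * (1 + 1/(α-1))) with hC2
  have hC2pos : 0 < C2 := by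
    apply mul_pos (Real.rpow_pos_of_pos two_pos _)
    have : (0:ℝ) < 1/(α-1) := one_div_pos.mpr (by linarith)
    linarith
  have hC3pos : (0:ℝ) < 1 + 1/(α-1-1) := by
    have : (0:ℝ) < 1/(α-1-1) := one_div_pos.mpr (by linarith)
    linarith
  refine ⟨C2 * (1 + 1/(α-1-1)), mul_pos hC2pos hC3pos, ?_⟩
  intro m kx ky hkx hkxm hky hkym
  have hstep1 : ∑ ix ∈ Finset.Icc 1 m, ∑ iy ∈ Finset.Icc 1 m,
      (((ix : ℝ) + kx - 1) ^ 2 + ((iy : ℝ) - ky) ^ 2) ^ (-(α / 2))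
      ≤ ∑ ix ∈ Finset.Icc 1 m, C2 * ((ix + kx - 1 : ℕ) : ℝ) ^ (1 - α) := by
    apply Finset.sum_le_sum
    intro ix hix
    have hix1 : 1 ≤ ix := (Finset.mem_Icc.mp hix).1
    set j : ℕ := ix + kx - 1 with hjdef
    have hj : 1 ≤ j := by omega
    have hcast : ((j : ℕ) : ℝ) = (ix : ℝ) + kx - 1 := by
      rw [hjdef]
      push_cast [Nat.cast_sub (show 1 ≤ ix + kx by omega)]
      ring
    rw [← hcast]
    calc ∑ iy ∈ Finset.Icc 1 m, ((j:ℝ) ^ 2 + ((iy : ℝ) - ky) ^ 2) ^ (-(α / 2))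
        ≤ ∑ iy ∈ Finset.Icc 1 m, 2 ^ (α/2) * ((j:ℝ) + |(iy:ℝ) - ky|) ^ (-α) :=
          Finset.sum_le_sum fun iy _ => dk_pointwise α hα j hj _
      _ = 2 ^ (α/2) * ∑ iy ∈ Finset.Icc 1 m, ((j:ℝ) + |(iy:ℝ) - ky|) ^ (-α) :=
          (Finset.mul_sum _ _ _).symm
      _ ≤ 2 ^ (α/2) * (2 * (1 + 1/(α-1)) * (j:ℝ) ^ (1-α)) := by
          apply mul_le_mul_of_nonneg_left (dk_abs_sum α h1α j ky m hj hky hkym)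
          positivity
      _ = C2 * ((j : ℕ) : ℝ) ^ (1 - α) := by rw [hC2]; ring
  have hstep2 : ∑ ix ∈ Finset.Icc 1 m, C2 * ((ix + kx - 1 : ℕ) : ℝ) ^ (1 - α)
      ≤ C2 * (1 + 1/(α-1-1)) * (kx : ℝ) ^ (2 - α) := by
    rw [← Finset.mul_sum]
    have hS : ∑ ix ∈ Finset.Icc 1 m, ((ix + kx - 1 : ℕ) : ℝ) ^ (1 - α)
        ≤ (1 + 1/(α-1-1)) * (kx : ℝ) ^ (2 - α) := ?_
    · calc C2 * ∑ ix ∈ Finset.Icc 1 m, ((ix + kx - 1 : ℕ) : ℝ) ^ (1 - α)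
          ≤ C2 * ((1 + 1/(α-1-1)) * (kx : ℝ) ^ (2 - α)) :=
            mul_le_mul_of_nonneg_left hS hC2pos.le
        _ = C2 * (1 + 1/(α-1-1)) * (kx : ℝ) ^ (2 - α) := by ring
    have hIcc : Finset.Icc 1 m = Finset.Ico 1 (m + 1) := (Finset.Ico_add_one_right_eq_Icc 1 m).symm
    rw [hIcc, Finset.sum_Ico_eq_sum_range]
    have hm1 : m + 1 - 1 = m := by omega
    rw [hm1]
    have heq : ∀ i ∈ Finset.range m,
        ((1 + i + kx - 1 : ℕ) : ℝ) ^ (1 - α) = ((kx:ℝ) + i) ^ (-(α-1)) := by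
      intro i _
      have h1 : 1 + i + kx - 1 = kx + i := by omega
      rw [h1, show (1 - α) = -(α-1) by ring]
      push_cast
      ring_nf
    rw [Finset.sum_congr rfl heq]
    have := dk_tailR (α-1) hα1 kx hkx m
    rw [show (1 - (α-1)) = 2 - α by ring] at this
    exact this
  linarith
end

section
/- For integers k_x, k_y with 1 ≤ k_x, k_y ≤ √n and α = 2, there exists a constant K > 0 independent of k_x, k_y, n such that d_{k_x,k_y} = ∑_{i_x=1}^{√n} ∑_{i_y=1}^{√n} ((i_x + k_x - 1)² + (i_y - k_y)²)^{-1} ≤ K·log n. -/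
open Finset

private lemma tele_bound (c : ℕ) (hc : 1 ≤ c) (m : ℕ) :
    ∑ j ∈ Finset.range m, ((c : ℝ) ^ 2 + (j : ℝ) ^ 2)⁻¹ ≤ 4 / c := by
  have hc' : (1 : ℝ) ≤ (c : ℝ) := by exact_mod_cast hc
  have hcpos : (0 : ℝ) < c := by linarith
  have key : ∀ k : ℕ, ∑ j ∈ Finset.range (k + 1), ((c : ℝ) ^ 2 + (j : ℝ) ^ 2)⁻¹
      ≤ 2 / (c : ℝ) ^ 2 + 2 / c - 2 / ((c : ℝ) + k) := by
    intro k
    induction k with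
    | zero =>
        simp only [Finset.sum_range_one, Nat.cast_zero, add_zero]
        norm_num
        have h1 : ((c : ℝ) ^ 2)⁻¹ ≤ 2 / (c:ℝ)^2 := by
          rw [inv_eq_one_div]; gcongr; norm_num
        linarith
    | succ k ih =>
        rw [Finset.sum_range_succ]
        have hterm : ((c : ℝ) ^ 2 + ((k + 1 : ℕ) : ℝ) ^ 2)⁻¹
            ≤ 2 / ((c : ℝ) + k) - 2 / ((c : ℝ) + (k + 1 : ℕ)) := by
          have hk : (0:ℝ) ≤ (k:ℝ) := Nat.cast_nonneg k
          push_cast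
          rw [div_sub_div _ _ (by linarith) (by linarith)]
          rw [inv_eq_one_div, div_le_div_iff₀ (by positivity) (by positivity)]
          ring_nf
          nlinarith [sq_nonneg ((c:ℝ) - k), sq_nonneg ((c:ℝ) + k)]
        push_cast at hterm ⊢
        linarith
  cases m with
  | zero => simp; positivity
  | succ k =>
      refine (key k).trans ?_
      have h1 : 2 / (c : ℝ) ^ 2 ≤ 2 / c := by
        apply div_le_div_of_nonneg_left (by norm_num) hcpos
        nlinarith
      have h2 : 0 < (c : ℝ) + k := by have := Nat.cast_nonneg (α := ℝ) k; linarith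
      have h3 : 0 < 2 / ((c : ℝ) + k) := by positivity
      have h4 : 4 / (c:ℝ) = 2 / c + 2 / c := by ring
      linarith

private lemma inner_bound (c ky m : ℕ) (hc : 1 ≤ c) (h1 : 1 ≤ ky) (h2 : ky ≤ m) :
    ∑ iy ∈ Finset.Icc 1 m, ((c : ℝ) ^ 2 + ((iy : ℝ) - (ky : ℝ)) ^ 2)⁻¹ ≤ 8 / c := by
  have hc' : (1 : ℝ) ≤ (c : ℝ) := by exact_mod_cast hc
  have hcpos : (0 : ℝ) < c := by linarith
  have hIcc : Finset.Icc 1 m = Finset.Ioc 0 m := Finset.Icc_add_one_left_eq_Ioc 0 m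
  rw [hIcc, ← Finset.sum_Ioc_consecutive _ (Nat.zero_le ky) h2]
  have hA : ∑ iy ∈ Finset.Ioc 0 ky, ((c : ℝ) ^ 2 + ((iy : ℝ) - (ky : ℝ)) ^ 2)⁻¹
      = ∑ j ∈ Finset.range ky, ((c : ℝ) ^ 2 + (j : ℝ) ^ 2)⁻¹ := by
    refine Finset.sum_nbij' (fun a => ky - a) (fun b => ky - b) ?_ ?_ ?_ ?_ ?_
    · intro a ha; simp only [Finset.mem_Ioc] at ha; simp only [Finset.mem_range]; omega
    · intro b hb; simp only [Finset.mem_range] at hb; simp only [Finset.mem_Ioc]; omega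
    · intro a ha; simp only [Finset.mem_Ioc] at ha; omega
    · intro b hb; simp only [Finset.mem_range] at hb; omega
    · intro a ha
      simp only [Finset.mem_Ioc] at ha
      have : ((ky - a : ℕ) : ℝ) = (ky : ℝ) - a := Nat.cast_sub ha.2
      rw [this]; ring_nf
  have hB : ∑ iy ∈ Finset.Ioc ky m, ((c : ℝ) ^ 2 + ((iy : ℝ) - (ky : ℝ)) ^ 2)⁻¹
      = ∑ j ∈ Finset.Ioc 0 (m - ky), ((c : ℝ) ^ 2 + (j : ℝ) ^ 2)⁻¹ := by
    refine Finset.sum_nbij' (fun a => a - ky) (fun b => b + ky) ?_ ?_ ?_ ?_ ?_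
    · intro a ha; simp only [Finset.mem_Ioc] at ha; simp only [Finset.mem_Ioc]; omega
    · intro b hb; simp only [Finset.mem_Ioc] at hb; simp only [Finset.mem_Ioc]; omega
    · intro a ha; simp only [Finset.mem_Ioc] at ha; omega
    · intro b hb; simp only [Finset.mem_Ioc] at hb; omega
    · intro a ha
      simp only [Finset.mem_Ioc] at ha
      have : ((a - ky : ℕ) : ℝ) = (a : ℝ) - ky := Nat.cast_sub ha.1.le
      rw [this]
  rw [hA, hB]
  have hnonneg : ∀ j : ℕ, (0 : ℝ) ≤ ((c : ℝ) ^ 2 + (j : ℝ) ^ 2)⁻¹ := by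
    intro j; positivity
  have hA' : ∑ j ∈ Finset.range ky, ((c : ℝ) ^ 2 + (j : ℝ) ^ 2)⁻¹
      ≤ ∑ j ∈ Finset.range m, ((c : ℝ) ^ 2 + (j : ℝ) ^ 2)⁻¹ := by
    apply Finset.sum_le_sum_of_subset_of_nonneg
    · exact Finset.range_subset_range.2 h2
    · intro j _ _; exact hnonneg j
  have hB' : ∑ j ∈ Finset.Ioc 0 (m - ky), ((c : ℝ) ^ 2 + (j : ℝ) ^ 2)⁻¹
      ≤ ∑ j ∈ Finset.range m, ((c : ℝ) ^ 2 + (j : ℝ) ^ 2)⁻¹ := by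
    apply Finset.sum_le_sum_of_subset_of_nonneg
    · intro j hj; simp only [Finset.mem_Ioc] at hj; simp only [Finset.mem_range]; omega
    · intro j _ _; exact hnonneg j
  have ht := tele_bound c hc m
  have h8 : 8 / (c : ℝ) = 4 / c + 4 / c := by ring
  linarith

/-- **Logarithmic bound on the power transfer sum, `α = 2`.** For a perfect
square `n = m²` and `1 ≤ k_x, k_y ≤ m = √n`, there is a constant `K > 0`
independent of `k_x, k_y, n` with
`∑_{i_x=1}^{√n} ∑_{i_y=1}^{√n} ((i_x+k_x-1)² + (i_y-k_y)²)^{-1} ≤ K·log n`. -/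
theorem dk_log_bound :
    ∃ K : ℝ, 0 < K ∧ ∀ n m kx ky : ℕ, n = m ^ 2 → 2 ≤ m →
      1 ≤ kx → kx ≤ m → 1 ≤ ky → ky ≤ m →
      ∑ ix ∈ Finset.Icc 1 m, ∑ iy ∈ Finset.Icc 1 m,
          (((ix : ℝ) + kx - 1) ^ 2 + ((iy : ℝ) - ky) ^ 2)⁻¹
        ≤ K * Real.log n := by
  refine ⟨12, by norm_num, ?_⟩
  intro n m kx ky hn hm hkx1 hkxm hky1 hkym
  have step1 : ∑ ix ∈ Finset.Icc 1 m, ∑ iy ∈ Finset.Icc 1 m,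
      (((ix : ℝ) + kx - 1) ^ 2 + ((iy : ℝ) - ky) ^ 2)⁻¹
      ≤ ∑ ix ∈ Finset.Icc 1 m, 8 / (ix : ℝ) := by
    apply Finset.sum_le_sum
    intro ix hix
    simp only [Finset.mem_Icc] at hix
    have hix1 : (1 : ℝ) ≤ (ix : ℝ) := by exact_mod_cast hix.1
    have hkx1' : (1 : ℝ) ≤ (kx : ℝ) := by exact_mod_cast hkx1
    calc ∑ iy ∈ Finset.Icc 1 m, (((ix : ℝ) + kx - 1) ^ 2 + ((iy : ℝ) - ky) ^ 2)⁻¹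
        ≤ ∑ iy ∈ Finset.Icc 1 m, ((ix : ℝ) ^ 2 + ((iy : ℝ) - ky) ^ 2)⁻¹ := by
          apply Finset.sum_le_sum
          intro iy _
          apply inv_anti₀
          · positivity
          · nlinarith
      _ ≤ 8 / ix := inner_bound ix ky m hix.1 hky1 hkym
  have harm : ∑ ix ∈ Finset.Icc 1 m, 8 / (ix : ℝ) = 8 * ((harmonic m : ℚ) : ℝ) := by
    rw [show ((harmonic m : ℚ) : ℝ) = ∑ ix ∈ Finset.Icc 1 m, (ix : ℝ)⁻¹ by
      rw [harmonic_eq_sum_Icc]; push_cast; rfl]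
    rw [Finset.mul_sum]
    apply Finset.sum_congr rfl
    intro x _
    rw [div_eq_mul_inv]
  have hlog : Real.log n = 2 * Real.log m := by
    rw [hn]; push_cast; rw [Real.log_pow]; norm_num
  have hm2 : (2 : ℝ) ≤ (m : ℝ) := by exact_mod_cast hm
  have hlogm : Real.log 2 ≤ Real.log m := Real.log_le_log (by norm_num) hm2
  have hlog2 : (0.6931471803 : ℝ) < Real.log 2 := Real.log_two_gt_d9
  have hharm : ((harmonic m : ℚ) : ℝ) ≤ 1 + Real.log m := harmonic_le_one_add_log m
  have hhnn : (0:ℝ) ≤ Real.log m := by linarith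
  calc ∑ ix ∈ Finset.Icc 1 m, ∑ iy ∈ Finset.Icc 1 m,
      (((ix : ℝ) + kx - 1) ^ 2 + ((iy : ℝ) - ky) ^ 2)⁻¹
      ≤ 8 * ((harmonic m : ℚ) : ℝ) := by rw [← harm]; exact step1
    _ ≤ 8 * (1 + Real.log m) := by linarith
    _ ≤ 12 * Real.log n := by rw [hlog]; linarith
end

section
/- For integers k_x, k_y with 1 ≤ k_x, k_y ≤ √n and any α ≥ 2, there exists a constant K > 0 independent of k_x, k_y, n such that d_{k_x,k_y} = ∑_{i_x=1}^{√n} ∑_{i_y=1}^{√n} ((i_x + k_x - 1)² + (i_y - k_y)²)^{-α/2} ≥ K·k_x^{2-α}. -/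
/-- **Lower bound on the power transfer sum, `α ≥ 2`.** For
`d_{k_x,k_y} = ∑_{i_x=1}^{√n} ∑_{i_y=1}^{√n} ((i_x+k_x-1)² + (i_y-k_y)²)^{-α/2}`
with `1 ≤ k_x, k_y ≤ √n`, there is a constant `K > 0` independent of
`k_x, k_y, n` with `d_{k_x,k_y} ≥ K·k_x^{2-α}`. -/
theorem dk_lower_bound (α : ℝ) (hα : 2 ≤ α) :
    ∃ K : ℝ, 0 < K ∧ ∀ m kx ky : ℕ, 1 ≤ kx → kx ≤ m → 1 ≤ ky → ky ≤ m →
      K * (kx : ℝ) ^ (2 - α)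
        ≤ ∑ ix ∈ Finset.Icc 1 m, ∑ iy ∈ Finset.Icc 1 m,
            (((ix : ℝ) + kx - 1) ^ 2 + ((iy : ℝ) - ky) ^ 2) ^ (-(α / 2)) := by
  refine ⟨(5:ℝ) ^ (-(α/2)), Real.rpow_pos_of_pos (by norm_num) _, ?_⟩
  intro m kx ky hkx hkxm hky hkym
  set a := max 1 (ky + 1 - kx) with ha
  set b := min m (ky + kx - 1) with hb
  have hxpos : (0:ℝ) < kx := by exact_mod_cast hkx
  set c : ℝ := (5:ℝ) ^ (-(α/2)) * (kx:ℝ) ^ (-α) with hc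
  have hcpos : 0 < c := by positivity
  -- termwise nonnegativity
  have hnonneg : ∀ ix iy : ℕ,
      (0:ℝ) ≤ (((ix : ℝ) + kx - 1) ^ 2 + ((iy : ℝ) - ky) ^ 2) ^ (-(α / 2)) := by
    intro ix iy
    apply Real.rpow_nonneg
    positivity
  -- termwise lower bound on the block
  have hterm : ∀ ix ∈ Finset.Icc 1 kx, ∀ iy ∈ Finset.Icc a b,
      c ≤ (((ix : ℝ) + kx - 1) ^ 2 + ((iy : ℝ) - ky) ^ 2) ^ (-(α / 2)) := by
    intro ix hix iy hiy
    simp only [Finset.mem_Icc] at hix hiy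
    have h1 : (1:ℝ) ≤ ix := by exact_mod_cast hix.1
    have h2 : (ix:ℝ) ≤ kx := by exact_mod_cast hix.2
    have hy1 : ky ≤ iy + kx := by omega
    have hy2 : iy ≤ ky + kx := by omega
    have hy1' : (ky:ℝ) ≤ iy + kx := by exact_mod_cast hy1
    have hy2' : (iy:ℝ) ≤ ky + kx := by exact_mod_cast hy2
    have hbase1 : (0:ℝ) < ((ix : ℝ) + kx - 1) ^ 2 + ((iy : ℝ) - ky) ^ 2 := by
      have : (0:ℝ) < (ix : ℝ) + kx - 1 := by linarith
      positivity
    have hbase2 : ((ix : ℝ) + kx - 1) ^ 2 + ((iy : ℝ) - ky) ^ 2 ≤ 5 * (kx:ℝ)^2 := by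
      have hA : ((ix : ℝ) + kx - 1) ^ 2 ≤ (2*(kx:ℝ))^2 := by
        apply sq_le_sq' <;> nlinarith
      have hB : ((iy : ℝ) - ky) ^ 2 ≤ (kx:ℝ)^2 := by
        apply sq_le_sq' <;> linarith
      nlinarith
    have key : ((5:ℝ) * (kx:ℝ)^2) ^ (-(α/2))
        ≤ (((ix : ℝ) + kx - 1) ^ 2 + ((iy : ℝ) - ky) ^ 2) ^ (-(α / 2)) := by
      apply Real.rpow_le_rpow_of_nonpos hbase1 hbase2
      have : (0:ℝ) < α := by linarith
      linarith
    refine le_trans (le_of_eq ?_) key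
    rw [hc, Real.mul_rpow (by norm_num) (by positivity)]
    congr 1
    rw [← Real.rpow_natCast (kx:ℝ) 2, ← Real.rpow_mul (le_of_lt hxpos)]
    norm_num
    ring_nf
  -- cardinalities
  have hcard_a : kx ≤ (Finset.Icc a b).card := by
    rw [Nat.card_Icc]; omega
  have hsubI : Finset.Icc a b ⊆ Finset.Icc 1 m := by
    apply Finset.Icc_subset_Icc <;> omega
  have hsubO : Finset.Icc 1 kx ⊆ Finset.Icc 1 m :=
    Finset.Icc_subset_Icc le_rfl hkxm
  calc (5:ℝ) ^ (-(α/2)) * (kx : ℝ) ^ (2 - α)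
      = (kx:ℝ) * ((kx:ℝ) * c) := by
        rw [hc]
        rw [show (2:ℝ) - α = 1 + (1 + -α) by ring,
          Real.rpow_add hxpos, Real.rpow_add hxpos, Real.rpow_one]
        ring
    _ ≤ ((Finset.Icc 1 kx).card : ℝ) * (((Finset.Icc a b).card : ℝ) * c) := by
        have h1 : (kx:ℝ) ≤ ((Finset.Icc 1 kx).card : ℝ) := by
          rw [Nat.card_Icc]; push_cast; norm_num
        have h2 : (kx:ℝ) ≤ ((Finset.Icc a b).card : ℝ) := by exact_mod_cast hcard_a
        have : (kx:ℝ) * c ≤ ((Finset.Icc a b).card : ℝ) * c :=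
          mul_le_mul_of_nonneg_right h2 hcpos.le
        apply mul_le_mul h1 this (by positivity) (by positivity)
    _ = ∑ ix ∈ Finset.Icc 1 kx, ∑ iy ∈ Finset.Icc a b, c := by
        simp [Finset.sum_const, nsmul_eq_mul, mul_assoc]
    _ ≤ ∑ ix ∈ Finset.Icc 1 kx, ∑ iy ∈ Finset.Icc a b,
          (((ix : ℝ) + kx - 1) ^ 2 + ((iy : ℝ) - ky) ^ 2) ^ (-(α / 2)) := by
        apply Finset.sum_le_sum
        intro ix hix
        apply Finset.sum_le_sum
        intro iy hiy
        exact hterm ix hix iy hiy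
    _ ≤ ∑ ix ∈ Finset.Icc 1 kx, ∑ iy ∈ Finset.Icc 1 m,
          (((ix : ℝ) + kx - 1) ^ 2 + ((iy : ℝ) - ky) ^ 2) ^ (-(α / 2)) := by
        apply Finset.sum_le_sum
        intro ix _
        exact Finset.sum_le_sum_of_subset_of_nonneg hsubI (fun iy _ _ => hnonneg ix iy)
    _ ≤ ∑ ix ∈ Finset.Icc 1 m, ∑ iy ∈ Finset.Icc 1 m,
          (((ix : ℝ) + kx - 1) ^ 2 + ((iy : ℝ) - ky) ^ 2) ^ (-(α / 2)) := by
        apply Finset.sum_le_sum_of_subset_of_nonneg hsubO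
        intro ix _ _
        exact Finset.sum_nonneg fun iy _ => hnonneg ix iy
end

section
/- Let Y_d = ∑_{s=1}^{M} H_{ds}·X_s + Z_d where the X_s are independent zero-mean with E[|X_s|²] = P·r_SD^α / M, Z_d ~ complex Gaussian with variance N_0 independent of everything, and |H_{ds}|² = G·r_{sd}^{-α} with r_SD - √(2A_c) ≤ r_{sd} ≤ r_SD + √(2A_c) and r_SD ≥ 2√(A_c). Then (√2/(√2+1))^α·G·P + N_0 ≤ E[|Y_d|²] ≤ (√2/(√2-1))^α·G·P + N_0. In particular the received power is bounded above and below by constants independent of M. -/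
open MeasureTheory ProbabilityTheory

lemma sum_sq_integral_of_indep {ι : Type*} [Fintype ι] {Ω : Type*} [MeasurableSpace Ω]
    (μ : Measure Ω) [IsProbabilityMeasure μ] (f : ι → Ω → ℝ)
    (hL2 : ∀ i, MemLp (f i) 2 μ)
    (hind : ∀ i j, i ≠ j → IndepFun (f i) (f j) μ)
    (hmean : ∀ i, ∫ ω, f i ω ∂μ = 0) :
    ∫ ω, (∑ i, f i ω) ^ 2 ∂μ = ∑ i, ∫ ω, f i ω ^ 2 ∂μ := by
  have hint : ∀ i j, Integrable (fun ω => f i ω * f j ω) μ := by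
    intro i j
    rcases eq_or_ne i j with rfl | h
    · simpa [pow_two] using (hL2 i).integrable_sq
    · exact (hind i j h).integrable_mul ((hL2 i).integrable one_le_two)
        ((hL2 j).integrable one_le_two)
  have h1 : ∫ ω, (∑ i, f i ω) ^ 2 ∂μ = ∑ i, ∑ j, ∫ ω, f i ω * f j ω ∂μ := by
    rw [show (fun ω => (∑ i, f i ω) ^ 2) = fun ω => ∑ i, ∑ j, f i ω * f j ω by
      funext ω; rw [sq, Finset.sum_mul_sum]]
    rw [integral_finset_sum _ fun i _ => integrable_finset_sum _ fun j _ => hint i j]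
    exact Finset.sum_congr rfl fun i _ => integral_finset_sum _ fun j _ => hint i j
  rw [h1]
  refine Finset.sum_congr rfl fun i _ => ?_
  rw [Finset.sum_eq_single i]
  · simp [pow_two]
  · intro j _ hji
    rw [(hind i j hji.symm).integral_fun_mul_eq_mul_integral (hL2 i).aestronglyMeasurable
      (hL2 j).aestronglyMeasurable, hmean i, zero_mul]
  · intro h; exact absurd (Finset.mem_univ i) h


/-- **Bounded received power in the MIMO phase.** Let
`Y_d = ∑_{s=1}^M H_{ds}·X_s + Z_d` where the `X_s` and `Z_d` are jointly
independent, the `X_s` are zero-mean with `E[|X_s|²] = P·r_SD^α/M`, `Z_d` is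
zero-mean noise with `E[|Z_d|²] = N₀`, and `|H_{ds}|² = G/r_{sd}^α` with
`r_SD - √(2A_c) ≤ r_{sd} ≤ r_SD + √(2A_c)` and `r_SD ≥ 2√A_c`. Then
`(√2/(√2+1))^α·GP + N₀ ≤ E[|Y_d|²] ≤ (√2/(√2-1))^α·GP + N₀`; in particular the
received power is bounded above and below by constants independent of `M`. -/
theorem mimo_received_power_bounds {Ω : Type*} [MeasurableSpace Ω] (μ : Measure Ω)
    [IsProbabilityMeasure μ] (M : ℕ) (hM : 1 ≤ M)
    (α G P N0 A_c r_SD : ℝ) (hα : 2 ≤ α) (hG : 0 < G) (hP : 0 < P) (hN0 : 0 ≤ N0)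
    (hAc : 0 < A_c) (hfar : 2 * Real.sqrt A_c ≤ r_SD)
    (r : Fin M → ℝ)
    (hrlo : ∀ s, r_SD - Real.sqrt (2 * A_c) ≤ r s)
    (hrhi : ∀ s, r s ≤ r_SD + Real.sqrt (2 * A_c))
    (H : Fin M → ℂ) (hH : ∀ s, ‖H s‖ ^ 2 = G / (r s) ^ α)
    (X : Fin M → Ω → ℂ) (Z : Ω → ℂ)
    (hXmeas : ∀ s, Measurable (X s)) (hZmeas : Measurable Z)
    (hXL2 : ∀ s, MemLp (X s) 2 μ) (hZL2 : MemLp Z 2 μ)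
    (hindep : iIndepFun
      (fun o : Option (Fin M) => o.elim Z X) μ)
    (hXmean : ∀ s, ∫ ω, X s ω ∂μ = 0)
    (hXvar : ∀ s, ∫ ω, ‖X s ω‖ ^ 2 ∂μ = P * r_SD ^ α / M)
    (hZmean : ∫ ω, Z ω ∂μ = 0)
    (hZvar : ∫ ω, ‖Z ω‖ ^ 2 ∂μ = N0) :
    (Real.sqrt 2 / (Real.sqrt 2 + 1)) ^ α * G * P + N0
        ≤ ∫ ω, ‖(∑ s, H s * X s ω) + Z ω‖ ^ 2 ∂μ ∧
      ∫ ω, ‖(∑ s, H s * X s ω) + Z ω‖ ^ 2 ∂μ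
        ≤ (Real.sqrt 2 / (Real.sqrt 2 - 1)) ^ α * G * P + N0 := by
  -- abbreviations
  set g : Option (Fin M) → Ω → ℂ := fun o => o.elim Z X with hgdef
  set c : Option (Fin M) → ℂ := fun o => o.elim 1 H with hcdef
  set W : Option (Fin M) → Ω → ℂ := fun o ω => c o * g o ω with hWdef
  have hgL2 : ∀ o, MemLp (g o) 2 μ := by rintro (_ | s); exacts [hZL2, hXL2 s]
  have hWL2 : ∀ o, MemLp (W o) 2 μ := fun o => (hgL2 o).const_mul (c o)
  have hgmean : ∀ o, ∫ ω, g o ω ∂μ = 0 := by rintro (_ | s); exacts [hZmean, hXmean s]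
  have hWint : ∀ o, Integrable (W o) μ := fun o => (hWL2 o).integrable one_le_two
  have hWmean : ∀ o, ∫ ω, W o ω ∂μ = 0 := by
    intro o
    rw [show (fun ω => W o ω) = fun ω => c o * g o ω from rfl, integral_const_mul,
      hgmean o, mul_zero]
  -- real and imaginary parts
  set a : Option (Fin M) → Ω → ℝ := fun o ω => (W o ω).re with hadef
  set b : Option (Fin M) → Ω → ℝ := fun o ω => (W o ω).im with hbdef
  have haL2 : ∀ o, MemLp (a o) 2 μ := fun o => (hWL2 o).re
  have hbL2 : ∀ o, MemLp (b o) 2 μ := fun o => (hWL2 o).im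
  have hamean : ∀ o, ∫ ω, a o ω ∂μ = 0 := by
    intro o
    have := integral_re (hWint o)
    rw [hWmean o] at this
    simpa using this
  have hbmean : ∀ o, ∫ ω, b o ω ∂μ = 0 := by
    intro o
    have := integral_im (hWint o)
    rw [hWmean o] at this
    simpa using this
  have haind : ∀ o p, o ≠ p → IndepFun (a o) (a p) μ := by
    intro o p hop
    exact (hindep.indepFun hop).comp
      (Complex.measurable_re.comp (measurable_id.const_mul (c o)))
      (Complex.measurable_re.comp (measurable_id.const_mul (c p)))
  have hbind : ∀ o p, o ≠ p → IndepFun (b o) (b p) μ := by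
    intro o p hop
    exact (hindep.indepFun hop).comp
      (Complex.measurable_im.comp (measurable_id.const_mul (c o)))
      (Complex.measurable_im.comp (measurable_id.const_mul (c p)))
  -- the integrand as a sum over Option (Fin M)
  have hYeq : ∀ ω, (∑ s, H s * X s ω) + Z ω = ∑ o : Option (Fin M), W o ω := by
    intro ω
    rw [Fintype.sum_option]
    simp only [hWdef, hcdef, hgdef, Option.elim, one_mul]
    ring
  have hnormsq : ∀ z : ℂ, ‖z‖ ^ 2 = z.re ^ 2 + z.im ^ 2 := by
    intro z
    rw [Complex.sq_norm, Complex.normSq_apply]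
    ring
  have key : ∫ ω, ‖(∑ s, H s * X s ω) + Z ω‖ ^ 2 ∂μ
      = N0 + ∑ s, ‖H s‖ ^ 2 * (P * r_SD ^ α / M) := by
    have h1 : ∀ ω, ‖(∑ s, H s * X s ω) + Z ω‖ ^ 2
        = (∑ o : Option (Fin M), a o ω) ^ 2 + (∑ o : Option (Fin M), b o ω) ^ 2 := by
      intro ω
      rw [hYeq ω, hnormsq, Complex.re_sum, Complex.im_sum]
    have haint : Integrable (fun ω => (∑ o : Option (Fin M), a o ω) ^ 2) μ := by
      simpa [pow_two] using
        (memLp_finset_sum' (μ := μ) Finset.univ (fun o _ => haL2 o)).integrable_sq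
    have hbint : Integrable (fun ω => (∑ o : Option (Fin M), b o ω) ^ 2) μ := by
      simpa [pow_two] using
        (memLp_finset_sum' (μ := μ) Finset.univ (fun o _ => hbL2 o)).integrable_sq
    calc ∫ ω, ‖(∑ s, H s * X s ω) + Z ω‖ ^ 2 ∂μ
        = ∫ ω, ((∑ o : Option (Fin M), a o ω) ^ 2 + (∑ o : Option (Fin M), b o ω) ^ 2) ∂μ := by
          exact integral_congr_ae (Filter.Eventually.of_forall fun ω => h1 ω)
      _ = (∫ ω, (∑ o : Option (Fin M), a o ω) ^ 2 ∂μ)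
          + ∫ ω, (∑ o : Option (Fin M), b o ω) ^ 2 ∂μ := integral_add haint hbint
      _ = (∑ o : Option (Fin M), ∫ ω, a o ω ^ 2 ∂μ)
          + ∑ o : Option (Fin M), ∫ ω, b o ω ^ 2 ∂μ := by
          rw [sum_sq_integral_of_indep μ a haL2 haind hamean,
            sum_sq_integral_of_indep μ b hbL2 hbind hbmean]
      _ = ∑ o : Option (Fin M), ∫ ω, ‖W o ω‖ ^ 2 ∂μ := by
          rw [← Finset.sum_add_distrib]
          refine Finset.sum_congr rfl fun o _ => ?_
          rw [← integral_add ((haL2 o).integrable_sq) ((hbL2 o).integrable_sq)]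
          exact integral_congr_ae (Filter.Eventually.of_forall fun ω =>
            (hnormsq (W o ω)).symm)
      _ = N0 + ∑ s, ‖H s‖ ^ 2 * (P * r_SD ^ α / M) := by
          rw [Fintype.sum_option]
          congr 1
          · simpa [hWdef, hcdef, hgdef] using hZvar
          · refine Finset.sum_congr rfl fun s _ => ?_
            have : ∀ ω, ‖W (some s) ω‖ ^ 2 = ‖H s‖ ^ 2 * ‖X s ω‖ ^ 2 := by
              intro ω
              simp [hWdef, hcdef, hgdef, norm_mul, mul_pow]
            rw [integral_congr_ae (Filter.Eventually.of_forall this),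
              integral_const_mul, hXvar s]
  -- arithmetic bounds
  have hs2 : (Real.sqrt 2) ^ 2 = 2 := Real.sq_sqrt (by norm_num)
  have hs2pos : 0 < Real.sqrt 2 := Real.sqrt_pos.mpr (by norm_num)
  have hs2gt1 : 1 < Real.sqrt 2 := by nlinarith
  have hs2lt2 : Real.sqrt 2 < 2 := by nlinarith
  have hsApos : 0 < Real.sqrt A_c := Real.sqrt_pos.mpr hAc
  have hsplit : Real.sqrt (2 * A_c) = Real.sqrt 2 * Real.sqrt A_c :=
    Real.sqrt_mul (by norm_num) A_c
  have hrSDpos : 0 < r_SD := lt_of_lt_of_le (by linarith) hfar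
  have hrpos : ∀ s, 0 < r s := by
    intro s
    have := hrlo s
    rw [hsplit] at this
    nlinarith
  have hratio_lo : ∀ s, Real.sqrt 2 / (Real.sqrt 2 + 1) ≤ r_SD / r s := by
    intro s
    rw [div_le_div_iff₀ (by linarith) (hrpos s)]
    have := hrhi s
    rw [hsplit] at this
    nlinarith
  have hratio_hi : ∀ s, r_SD / r s ≤ Real.sqrt 2 / (Real.sqrt 2 - 1) := by
    intro s
    rw [div_le_div_iff₀ (hrpos s) (by linarith)]
    have := hrlo s
    rw [hsplit] at this
    nlinarith
  have hα0 : (0:ℝ) ≤ α := by linarith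
  have hterm : ∀ s : Fin M,
      (Real.sqrt 2 / (Real.sqrt 2 + 1)) ^ α * G * P / M
        ≤ ‖H s‖ ^ 2 * (P * r_SD ^ α / M) ∧
      ‖H s‖ ^ 2 * (P * r_SD ^ α / M)
        ≤ (Real.sqrt 2 / (Real.sqrt 2 - 1)) ^ α * G * P / M := by
    intro s
    have hrs := hrpos s
    have hrsα : 0 < (r s) ^ α := Real.rpow_pos_of_pos hrs α
    have hrSDα : 0 < r_SD ^ α := Real.rpow_pos_of_pos hrSDpos α
    have hdiv : (r_SD / r s) ^ α = r_SD ^ α / (r s) ^ α :=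
      Real.div_rpow hrSDpos.le hrs.le α
    have heq : ‖H s‖ ^ 2 * (P * r_SD ^ α / M)
        = (r_SD / r s) ^ α * (G * P / M) := by
      rw [hH s, hdiv]
      field_simp
    have hMpos : (0:ℝ) < M := by exact_mod_cast hM
    have hGPM : 0 < G * P / M := by positivity
    constructor
    · rw [heq]
      have h1 : (Real.sqrt 2 / (Real.sqrt 2 + 1)) ^ α ≤ (r_SD / r s) ^ α :=
        Real.rpow_le_rpow (by positivity) (hratio_lo s) hα0
      calc (Real.sqrt 2 / (Real.sqrt 2 + 1)) ^ α * G * P / M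
          = (Real.sqrt 2 / (Real.sqrt 2 + 1)) ^ α * (G * P / M) := by ring
        _ ≤ (r_SD / r s) ^ α * (G * P / M) := by
            exact mul_le_mul_of_nonneg_right h1 hGPM.le
    · rw [heq]
      have h1 : (r_SD / r s) ^ α ≤ (Real.sqrt 2 / (Real.sqrt 2 - 1)) ^ α :=
        Real.rpow_le_rpow (by positivity) (hratio_hi s) hα0
      calc (r_SD / r s) ^ α * (G * P / M)
          ≤ (Real.sqrt 2 / (Real.sqrt 2 - 1)) ^ α * (G * P / M) :=
            mul_le_mul_of_nonneg_right h1 hGPM.le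
        _ = (Real.sqrt 2 / (Real.sqrt 2 - 1)) ^ α * G * P / M := by ring
  have hcard : (Finset.univ : Finset (Fin M)).card = M := by simp
  have hMne : (M:ℝ) ≠ 0 := by
    have : (0:ℝ) < M := by exact_mod_cast hM
    linarith
  have hsum_lo : (Real.sqrt 2 / (Real.sqrt 2 + 1)) ^ α * G * P
      ≤ ∑ s, ‖H s‖ ^ 2 * (P * r_SD ^ α / M) := by
    calc (Real.sqrt 2 / (Real.sqrt 2 + 1)) ^ α * G * P
        = ∑ _s : Fin M, (Real.sqrt 2 / (Real.sqrt 2 + 1)) ^ α * G * P / M := by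
          rw [Finset.sum_const, hcard, nsmul_eq_mul]
          field_simp
      _ ≤ ∑ s, ‖H s‖ ^ 2 * (P * r_SD ^ α / M) :=
          Finset.sum_le_sum fun s _ => (hterm s).1
  have hsum_hi : ∑ s, ‖H s‖ ^ 2 * (P * r_SD ^ α / M)
      ≤ (Real.sqrt 2 / (Real.sqrt 2 - 1)) ^ α * G * P := by
    calc ∑ s, ‖H s‖ ^ 2 * (P * r_SD ^ α / M)
        ≤ ∑ _s : Fin M, (Real.sqrt 2 / (Real.sqrt 2 - 1)) ^ α * G * P / M :=
          Finset.sum_le_sum fun s _ => (hterm s).2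
      _ = (Real.sqrt 2 / (Real.sqrt 2 - 1)) ^ α * G * P := by
          rw [Finset.sum_const, hcard, nsmul_eq_mul]
          field_simp
  rw [key]
  constructor <;> linarith
end
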